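/- arXiv:2005.09995 — 3 statements merged into one kernel-verified Lean document; each statement's English description precedes it below -/
import Mathlib

section
/- Let H be a Hilbert space, (Ω, μ) a measure space, and F : Ω → H an integral frame with bounds A, B > 0 and frame operator S satisfying ⟪S x, x⟫ = ∫_Ω |⟪x, F ω⟫|² dμ(ω) for all x. Then A‖x‖² ≤ ⟪S x, x⟫ ≤ B‖x‖² for all x ∈ H; in particular S is a positive operator and S is bijective (invertible). -/
open MeasureTheory
open scoped InnerProductSpace

local notation "⟪" x ", " y "⟫" => @inner ℂ _ _ x y

theorem ContinuousLinearMap.bijective_of_forall_le_re_inner {𝕜 E : Type*} [RCLike 𝕜]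
    [NormedAddCommGroup E] [InnerProductSpace 𝕜 E] [CompleteSpace E] (T : E →L[𝕜] E)
    {c : ℝ} (hc : 0 < c) (hT : ∀ x, c * ‖x‖ ^ 2 ≤ RCLike.re ⟪T x, x⟫_𝕜) :
    Function.Bijective T := by
  refine isUnit_iff_bijective.mp <|
    T.isUnit_of_forall_le_norm_inner_map (c := c.toNNReal) (Real.toNNReal_pos.mpr hc) fun x => ?_
  calc ‖x‖ ^ 2 * c.toNNReal = c * ‖x‖ ^ 2 := by rw [Real.coe_toNNReal _ hc.le, mul_comm]
    _ ≤ RCLike.re ⟪T x, x⟫_𝕜 := hT x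
    _ ≤ ‖⟪T x, x⟫_𝕜‖ := RCLike.re_le_norm _

theorem integralFrame_frameOperator_positive_invertible_general
    {Ω : Type*} [MeasurableSpace Ω] (μ : Measure Ω)
    {H : Type*} [NormedAddCommGroup H] [InnerProductSpace ℂ H] [CompleteSpace H]
    (F : Ω → H)
    (A B : ℝ) (hA : 0 < A)
    (hframe : ∀ x : H,
      A * ‖x‖ ^ 2 ≤ ∫ ω, ‖⟪x, F ω⟫‖ ^ 2 ∂μ ∧
      (∫ ω, ‖⟪x, F ω⟫‖ ^ 2 ∂μ) ≤ B * ‖x‖ ^ 2)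
    (S : H →L[ℂ] H)
    (hS : ∀ x : H, ⟪S x, x⟫ = ((∫ ω, ‖⟪x, F ω⟫‖ ^ 2 ∂μ : ℝ) : ℂ)) :
    (∀ x : H, A * ‖x‖ ^ 2 ≤ (⟪S x, x⟫).re ∧ (⟪S x, x⟫).re ≤ B * ‖x‖ ^ 2) ∧
    (∀ x : H, 0 ≤ (⟪S x, x⟫).re) ∧ Function.Bijective S := by
  have hbounds : ∀ x : H, A * ‖x‖ ^ 2 ≤ (⟪S x, x⟫).re ∧ (⟪S x, x⟫).re ≤ B * ‖x‖ ^ 2 := by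
    intro x
    rw [hS x, Complex.ofReal_re]
    exact hframe x
  have hpos (x : H) : 0 ≤ (⟪S x, x⟫).re := (by positivity : 0 ≤ A * ‖x‖ ^ 2).trans (hbounds x).1
  exact ⟨hbounds, hpos, S.bijective_of_forall_le_re_inner hA fun x => (hbounds x).1⟩

/-- If `F` is an integral frame with bounds `A, B > 0` and frame operator `S`, then
`A‖x‖² ≤ ⟪S x, x⟫ ≤ B‖x‖²` for all `x`; in particular `S` is positive and bijective. -/
theorem integralFrame_frameOperator_positive_invertible
    {Ω : Type*} [MeasurableSpace Ω] (μ : Measure Ω)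
    {H : Type*} [NormedAddCommGroup H] [InnerProductSpace ℂ H] [CompleteSpace H]
    (F : Ω → H) (hmeas : ∀ x : H, Measurable fun ω => ⟪x, F ω⟫)
    (A B : ℝ) (hA : 0 < A) (hB : 0 < B)
    (hframe : ∀ x : H,
      A * ‖x‖ ^ 2 ≤ ∫ ω, ‖⟪x, F ω⟫‖ ^ 2 ∂μ ∧
      (∫ ω, ‖⟪x, F ω⟫‖ ^ 2 ∂μ) ≤ B * ‖x‖ ^ 2)
    (S : H →L[ℂ] H)
    (hS : ∀ x : H, ⟪S x, x⟫ = ((∫ ω, ‖⟪x, F ω⟫‖ ^ 2 ∂μ : ℝ) : ℂ)) :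
    (∀ x : H, A * ‖x‖ ^ 2 ≤ (⟪S x, x⟫).re ∧ (⟪S x, x⟫).re ≤ B * ‖x‖ ^ 2) ∧
    (∀ x : H, 0 ≤ (⟪S x, x⟫).re) ∧ Function.Bijective S :=
  integralFrame_frameOperator_positive_invertible_general μ F A B hA hframe S hS
end

section
/- Let F : Ω → H be an integral frame for a Hilbert space H with bounds A, B > 0, and let G : Ω → H be a map with ω ↦ ⟪x, G ω⟫ measurable for each x. Suppose there is a constant M > 0 such that for all x ∈ H, ∫_Ω |⟪x, F ω - G ω⟫|² dμ(ω) ≤ M · min(∫_Ω |⟪x, F ω⟫|² dμ(ω), ∫_Ω |⟪x, G ω⟫|² dμ(ω)). Then G is an integral frame for H: explicitly, (A / (1 + √M)²) ‖x‖² ≤ ∫_Ω |⟪x, G ω⟫|² dμ(ω) ≤ (1 + √M)² B ‖x‖² for all x ∈ H. -/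
open MeasureTheory
open scoped InnerProductSpace

local notation "⟪" x ", " y "⟫" => @inner ℂ _ _ x y

/-! The quantity `√(∫ ‖⟪x, F ω⟫‖²)` is the `L²(μ)`-norm of `ω ↦ ⟪x, F ω⟫`. Since
`⟪x, F ω⟫ - ⟪x, G ω⟫ = ⟪x, F ω - G ω⟫`, the triangle inequality in `L²(μ)` bounds either of the
norms for `F` and `G` by the other plus the norm of the difference, which the perturbation
hypothesis bounds by `√M` times either of them. Hence the two norms agree up to the factor `1 + √M`,
and the frame bounds of `F` transfer to `G`. -/

section SquareIntegral

variable {Ω E : Type*} [MeasurableSpace Ω] {μ : Measure Ω} [NormedAddCommGroup E]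

lemma MeasureTheory.MemLp.sqrt_integral_norm_sq_eq {f : Ω → E} (hf : MemLp f 2 μ) :
    √(∫ ω, ‖f ω‖ ^ 2 ∂μ) = (eLpNorm f 2 μ).toReal := by
  rw [hf.eLpNorm_eq_integral_rpow_norm two_ne_zero ENNReal.ofNat_ne_top,
    ENNReal.toReal_ofReal (by positivity), Real.sqrt_eq_rpow]
  norm_num

lemma sqrt_integral_norm_add_sq_le {f g : Ω → E} (hf : MemLp f 2 μ) (hg : MemLp g 2 μ) :
    √(∫ ω, ‖f ω + g ω‖ ^ 2 ∂μ) ≤ √(∫ ω, ‖f ω‖ ^ 2 ∂μ) + √(∫ ω, ‖g ω‖ ^ 2 ∂μ) := by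
  have hfg : √(∫ ω, ‖f ω + g ω‖ ^ 2 ∂μ) = (eLpNorm (f + g) 2 μ).toReal :=
    (hf.add hg).sqrt_integral_norm_sq_eq
  rw [hfg, hf.sqrt_integral_norm_sq_eq,
    hg.sqrt_integral_norm_sq_eq, ← ENNReal.toReal_add hf.eLpNorm_ne_top hg.eLpNorm_ne_top]
  exact ENNReal.toReal_mono (by simp [hf.eLpNorm_ne_top, hg.eLpNorm_ne_top])
    (eLpNorm_add_le hf.1 hg.1 one_le_two)

lemma memLp_two_norm_of_integrable_sq_norm {f : Ω → E}
    (hf : Integrable (fun ω => ‖f ω‖ ^ 2) μ) : MemLp (fun ω => ‖f ω‖) 2 μ := by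
  have hmeas : AEStronglyMeasurable (fun ω => ‖f ω‖) μ := by
    simpa only [Real.sqrt_sq (norm_nonneg _)] using
      Real.continuous_sqrt.comp_aestronglyMeasurable hf.1
  exact (memLp_two_iff_integrable_sq hmeas).2 hf

lemma sqrt_integral_norm_sq_le_of_norm_le {F G : Type*} [NormedAddCommGroup F]
    [NormedAddCommGroup G] {f : Ω → E} {g : Ω → F} {h : Ω → G}
    (hfgh : ∀ ω, ‖f ω‖ ≤ ‖g ω‖ + ‖h ω‖) (hg : Integrable (fun ω => ‖g ω‖ ^ 2) μ)
    (hh : Integrable (fun ω => ‖h ω‖ ^ 2) μ) :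
    √(∫ ω, ‖f ω‖ ^ 2 ∂μ) ≤ √(∫ ω, ‖g ω‖ ^ 2 ∂μ) + √(∫ ω, ‖h ω‖ ^ 2 ∂μ) := by
  have hg2 := memLp_two_norm_of_integrable_sq_norm hg
  have hh2 := memLp_two_norm_of_integrable_sq_norm hh
  calc √(∫ ω, ‖f ω‖ ^ 2 ∂μ) ≤ √(∫ ω, ‖‖g ω‖ + ‖h ω‖‖ ^ 2 ∂μ) := by
        refine Real.sqrt_le_sqrt (integral_mono_of_nonneg (ae_of_all _ fun ω => by positivity)
          ((hg2.add hh2).integrable_norm_pow two_ne_zero) (ae_of_all _ fun ω => ?_))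
        dsimp only [Pi.add_apply]
        gcongr
        exact (hfgh ω).trans (Real.le_norm_self _)
    _ ≤ √(∫ ω, ‖‖g ω‖‖ ^ 2 ∂μ) + √(∫ ω, ‖‖h ω‖‖ ^ 2 ∂μ) := sqrt_integral_norm_add_sq_le hg2 hh2
    _ = √(∫ ω, ‖g ω‖ ^ 2 ∂μ) + √(∫ ω, ‖h ω‖ ^ 2 ∂μ) := by simp only [norm_norm]

end SquareIntegral

lemma le_one_add_sqrt_sq_mul {a b d M : ℝ} (hb : 0 ≤ b) (hM : 0 ≤ M) (htri : √a ≤ √b + √d)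
    (hd : d ≤ M * b) : a ≤ (1 + √M) ^ 2 * b := by
  have hsd : √d ≤ √M * √b := by
    rw [← Real.sqrt_mul hM]
    exact Real.sqrt_le_sqrt hd
  have hsa : √a ≤ (1 + √M) * √b := by linarith
  rwa [Real.sqrt_le_left (by positivity), mul_pow, Real.sq_sqrt hb] at hsa

theorem integralFrame_perturbation_sufficient_general
    {Ω : Type*} [MeasurableSpace Ω] (μ : Measure Ω)
    {H : Type*} [NormedAddCommGroup H] [InnerProductSpace ℂ H]
    (F G : Ω → H)
    (hiF : ∀ x : H, Integrable (fun ω => ‖⟪x, F ω⟫‖ ^ 2) μ)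
    (hiG : ∀ x : H, Integrable (fun ω => ‖⟪x, G ω⟫‖ ^ 2) μ)
    (hiFG : ∀ x : H, Integrable (fun ω => ‖⟪x, F ω - G ω⟫‖ ^ 2) μ)
    (A B : ℝ)
    (hframe : ∀ x : H,
      A * ‖x‖ ^ 2 ≤ ∫ ω, ‖⟪x, F ω⟫‖ ^ 2 ∂μ ∧
      (∫ ω, ‖⟪x, F ω⟫‖ ^ 2 ∂μ) ≤ B * ‖x‖ ^ 2)
    (M : ℝ) (hM : 0 < M)
    (hpert : ∀ x : H,
      (∫ ω, ‖⟪x, F ω - G ω⟫‖ ^ 2 ∂μ) ≤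
        M * min (∫ ω, ‖⟪x, F ω⟫‖ ^ 2 ∂μ) (∫ ω, ‖⟪x, G ω⟫‖ ^ 2 ∂μ)) :
    ∀ x : H,
      A / (1 + Real.sqrt M) ^ 2 * ‖x‖ ^ 2 ≤ ∫ ω, ‖⟪x, G ω⟫‖ ^ 2 ∂μ ∧
      (∫ ω, ‖⟪x, G ω⟫‖ ^ 2 ∂μ) ≤ (1 + Real.sqrt M) ^ 2 * B * ‖x‖ ^ 2 := by
  intro x
  obtain ⟨hlower, hupper⟩ := hframe x
  have hF_le : ∀ ω, ‖⟪x, F ω⟫‖ ≤ ‖⟪x, G ω⟫‖ + ‖⟪x, F ω - G ω⟫‖ := fun ω => by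
    rw [inner_sub_right]
    exact norm_le_norm_add_norm_sub' _ _
  have hG_le : ∀ ω, ‖⟪x, G ω⟫‖ ≤ ‖⟪x, F ω⟫‖ + ‖⟪x, F ω - G ω⟫‖ := fun ω => by
    rw [inner_sub_right]
    exact norm_le_norm_add_norm_sub _ _
  have hF_by_G := le_one_add_sqrt_sq_mul (integral_nonneg fun _ => by positivity) hM.le
    (sqrt_integral_norm_sq_le_of_norm_le hF_le (hiG x) (hiFG x))
    ((hpert x).trans (mul_le_mul_of_nonneg_left (min_le_right _ _) hM.le))
  have hG_by_F := le_one_add_sqrt_sq_mul (integral_nonneg fun _ => by positivity) hM.le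
    (sqrt_integral_norm_sq_le_of_norm_le hG_le (hiF x) (hiFG x))
    ((hpert x).trans (mul_le_mul_of_nonneg_left (min_le_left _ _) hM.le))
  constructor
  · rw [div_mul_eq_mul_div, div_le_iff₀ (by positivity), mul_comm _ ((1 + √M) ^ 2)]
    exact hlower.trans hF_by_G
  · rw [mul_assoc]
    exact hG_by_F.trans (by gcongr)

/-- If `F` is an integral frame with bounds `A, B > 0` and `G` satisfies the perturbation
condition `∫ |⟪x, F ω - G ω⟫|² ≤ M min(∫ |⟪x, F ω⟫|², ∫ |⟪x, G ω⟫|²)`, then `G` is an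
integral frame with bounds `A/(1+√M)²` and `(1+√M)² B`. -/
theorem integralFrame_perturbation_sufficient
    {Ω : Type*} [MeasurableSpace Ω] (μ : Measure Ω)
    {H : Type*} [NormedAddCommGroup H] [InnerProductSpace ℂ H] [CompleteSpace H]
    (F G : Ω → H)
    (hmF : ∀ x : H, Measurable fun ω => ⟪x, F ω⟫)
    (hmG : ∀ x : H, Measurable fun ω => ⟪x, G ω⟫)
    (hiF : ∀ x : H, Integrable (fun ω => ‖⟪x, F ω⟫‖ ^ 2) μ)
    (hiG : ∀ x : H, Integrable (fun ω => ‖⟪x, G ω⟫‖ ^ 2) μ)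
    (hiFG : ∀ x : H, Integrable (fun ω => ‖⟪x, F ω - G ω⟫‖ ^ 2) μ)
    (A B : ℝ) (hA : 0 < A) (hB : 0 < B)
    (hframe : ∀ x : H,
      A * ‖x‖ ^ 2 ≤ ∫ ω, ‖⟪x, F ω⟫‖ ^ 2 ∂μ ∧
      (∫ ω, ‖⟪x, F ω⟫‖ ^ 2 ∂μ) ≤ B * ‖x‖ ^ 2)
    (M : ℝ) (hM : 0 < M)
    (hpert : ∀ x : H,
      (∫ ω, ‖⟪x, F ω - G ω⟫‖ ^ 2 ∂μ) ≤
        M * min (∫ ω, ‖⟪x, F ω⟫‖ ^ 2 ∂μ) (∫ ω, ‖⟪x, G ω⟫‖ ^ 2 ∂μ)) :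
    ∀ x : H,
      A / (1 + Real.sqrt M) ^ 2 * ‖x‖ ^ 2 ≤ ∫ ω, ‖⟪x, G ω⟫‖ ^ 2 ∂μ ∧
      (∫ ω, ‖⟪x, G ω⟫‖ ^ 2 ∂μ) ≤ (1 + Real.sqrt M) ^ 2 * B * ‖x‖ ^ 2 :=
  integralFrame_perturbation_sufficient_general μ F G hiF hiG hiFG A B hframe M hM hpert
end

section
/- Let H be a Hilbert space and F : Ω → H an integral frame with bounds A, B and frame operator S. Then ω ↦ S⁻¹(F ω) (the canonical dual frame) is an integral frame with bounds 1/B and 1/A, and its frame operator is S⁻¹. -/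
open MeasureTheory ContinuousLinearMap
open scoped InnerProductSpace

local notation "⟪" x ", " y "⟫" => @inner ℂ _ _ x y

/-!
Since `∫ ‖⟪x, F ω⟫‖² = re ⟪S x, x⟫`, the frame inequalities say exactly that `A ≤ S ≤ B` in the
Loewner order of the C⋆-algebra `H →L[ℂ] H`. Inversion is antitone on positive invertible
elements, so `B⁻¹ ≤ S⁻¹ ≤ A⁻¹`. Transporting `F` by an operator `V` turns the frame operator
into `V S V†`; for the self-adjoint `V = S⁻¹` this is `S⁻¹`, whose quadratic form is therefore
the frame integral of the dual family, and the bounds on `S⁻¹` become its frame bounds.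
-/

namespace CStarAlgebra

variable {A : Type*} [CStarAlgebra A] [PartialOrder A] [StarOrderedRing A]

lemma inv_le_algebraMap_inv {a : Aˣ} {c : ℝ} (hc : 0 < c) (h : algebraMap ℝ A c ≤ a) :
    (↑a⁻¹ : A) ≤ algebraMap ℝ A c⁻¹ := by
  simpa using CStarAlgebra.inv_le_inv
    (a := Units.map (algebraMap ℝ A).toMonoidHom (Units.mk0 c hc.ne')) (algebraMap_nonneg A hc.le) h

lemma algebraMap_inv_le_inv {a : Aˣ} {c : ℝ} (hc : 0 < c) (ha : 0 ≤ (a : A))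
    (h : a ≤ algebraMap ℝ A c) : algebraMap ℝ A c⁻¹ ≤ (↑a⁻¹ : A) := by
  simpa using CStarAlgebra.inv_le_inv
    (b := Units.map (algebraMap ℝ A).toMonoidHom (Units.mk0 c hc.ne')) ha h

end CStarAlgebra

namespace ContinuousLinearMap

variable {H : Type*} [NormedAddCommGroup H] [InnerProductSpace ℂ H]

lemma re_inner_algebraMap_apply_self (c : ℝ) (x : H) :
    RCLike.re ⟪algebraMap ℝ (H →L[ℂ] H) c x, x⟫ = c * ‖x‖ ^ 2 := by
  simp [IsScalarTower.algebraMap_apply ℝ ℂ (H →L[ℂ] H), Algebra.algebraMap_eq_smul_one,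
    ← inner_self_eq_norm_sq (𝕜 := ℂ)]

variable [CompleteSpace H]

lemma algebraMap_le_iff_forall_le_re_inner {T : H →L[ℂ] H} (hT : IsSelfAdjoint T) (c : ℝ) :
    algebraMap ℝ (H →L[ℂ] H) c ≤ T ↔ ∀ x, c * ‖x‖ ^ 2 ≤ RCLike.re ⟪T x, x⟫ := by
  rw [le_def, isPositive_def', and_iff_right (hT.sub (.algebraMap _ (.all c)))]
  simp only [reApplyInnerSelf, sub_apply, inner_sub_left, map_sub, re_inner_algebraMap_apply_self,
    sub_nonneg]

lemma le_algebraMap_iff_forall_re_inner_le {T : H →L[ℂ] H} (hT : IsSelfAdjoint T) (c : ℝ) :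
    T ≤ algebraMap ℝ (H →L[ℂ] H) c ↔ ∀ x, RCLike.re ⟪T x, x⟫ ≤ c * ‖x‖ ^ 2 := by
  rw [le_def, isPositive_def', and_iff_right ((IsSelfAdjoint.algebraMap _ (.all c)).sub hT)]
  simp only [reApplyInnerSelf, sub_apply, inner_sub_left, map_sub, re_inner_algebraMap_apply_self,
    sub_nonneg]

end ContinuousLinearMap

section IntegralFrame

variable {Ω : Type*} [MeasurableSpace Ω] {μ : Measure Ω}
  {H : Type*} [NormedAddCommGroup H] [InnerProductSpace ℂ H]

def IsFrameOperator (μ : Measure Ω) (F : Ω → H) (S : H →L[ℂ] H) : Prop :=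
  ∀ x y, ⟪S x, y⟫ = ∫ ω, ⟪x, F ω⟫ * ⟪F ω, y⟫ ∂μ

namespace IsFrameOperator

variable {F : Ω → H} {S : H →L[ℂ] H}

lemma inner_apply_self (hS : IsFrameOperator μ F S) (x : H) :
    ⟪S x, x⟫ = ((∫ ω, ‖⟪x, F ω⟫‖ ^ 2 ∂μ : ℝ) : ℂ) := by
  rw [hS, ← integral_complex_ofReal]
  congr 1 with ω
  rw [← inner_conj_symm (F ω) x, RCLike.mul_conj]
  norm_cast

lemma integral_norm_inner_sq (hS : IsFrameOperator μ F S) (x : H) :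
    ∫ ω, ‖⟪x, F ω⟫‖ ^ 2 ∂μ = RCLike.re ⟪S x, x⟫ := by
  rw [hS.inner_apply_self, RCLike.re_to_complex, Complex.ofReal_re]

variable [CompleteSpace H]

lemma comp (hS : IsFrameOperator μ F S) (V : H →L[ℂ] H) :
    IsFrameOperator μ (fun ω => V (F ω)) (V ∘L S ∘L adjoint V) := by
  intro x y
  simp only [coe_comp, Function.comp_apply, ← adjoint_inner_left V, ← adjoint_inner_right V]
  exact hS _ _

lemma isSelfAdjoint (hS : IsFrameOperator μ F S) : IsSelfAdjoint S := by
  rw [isSelfAdjoint_iff_isSymmetric, LinearMap.isSymmetric_iff_inner_map_self_real]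
  intro x
  simp [hS.inner_apply_self]

lemma algebraMap_le_iff (hS : IsFrameOperator μ F S) (c : ℝ) :
    algebraMap ℝ (H →L[ℂ] H) c ≤ S ↔ ∀ x, c * ‖x‖ ^ 2 ≤ ∫ ω, ‖⟪x, F ω⟫‖ ^ 2 ∂μ := by
  simp only [algebraMap_le_iff_forall_le_re_inner hS.isSelfAdjoint, hS.integral_norm_inner_sq]

lemma le_algebraMap_iff (hS : IsFrameOperator μ F S) (c : ℝ) :
    S ≤ algebraMap ℝ (H →L[ℂ] H) c ↔ ∀ x, ∫ ω, ‖⟪x, F ω⟫‖ ^ 2 ∂μ ≤ c * ‖x‖ ^ 2 := by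
  simp only [le_algebraMap_iff_forall_re_inner_le hS.isSelfAdjoint, hS.integral_norm_inner_sq]

end IsFrameOperator

end IntegralFrame

theorem integralFrame_canonical_dual_general
    {Ω : Type*} [MeasurableSpace Ω] (μ : Measure Ω)
    {H : Type*} [NormedAddCommGroup H] [InnerProductSpace ℂ H] [CompleteSpace H]
    (F : Ω → H)
    (A B : ℝ) (hA : 0 < A) (hB : 0 < B)
    (hframe : ∀ x : H,
      A * ‖x‖ ^ 2 ≤ ∫ ω, ‖⟪x, F ω⟫‖ ^ 2 ∂μ ∧
      (∫ ω, ‖⟪x, F ω⟫‖ ^ 2 ∂μ) ≤ B * ‖x‖ ^ 2)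
    (S : H →L[ℂ] H)
    (hS : ∀ x y : H, ⟪S x, y⟫ = ∫ ω, ⟪x, F ω⟫ * ⟪F ω, y⟫ ∂μ)
    (Sinv : H →L[ℂ] H)
    (hS₁ : Sinv ∘L S = ContinuousLinearMap.id ℂ H)
    (hS₂ : S ∘L Sinv = ContinuousLinearMap.id ℂ H) :
    (∀ x : H,
      (1 / B) * ‖x‖ ^ 2 ≤ ∫ ω, ‖⟪x, Sinv (F ω)⟫‖ ^ 2 ∂μ ∧
      (∫ ω, ‖⟪x, Sinv (F ω)⟫‖ ^ 2 ∂μ) ≤ (1 / A) * ‖x‖ ^ 2) ∧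
    ∀ x y : H, (∫ ω, ⟪x, Sinv (F ω)⟫ * ⟪Sinv (F ω), y⟫ ∂μ) = ⟪Sinv x, y⟫ := by
  have hF : IsFrameOperator μ F S := hS
  let u : (H →L[ℂ] H)ˣ := ⟨S, Sinv, hS₂, hS₁⟩
  have hAS : algebraMap ℝ _ A ≤ S := (hF.algebraMap_le_iff A).2 fun x => (hframe x).1
  have hSB : S ≤ algebraMap ℝ _ B := (hF.le_algebraMap_iff B).2 fun x => (hframe x).2
  have hup : Sinv ≤ algebraMap ℝ _ A⁻¹ := CStarAlgebra.inv_le_algebraMap_inv (a := u) hA hAS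
  have hlow : algebraMap ℝ _ B⁻¹ ≤ Sinv := CStarAlgebra.algebraMap_inv_le_inv (a := u) hB
    ((algebraMap_nonneg _ hA.le).trans hAS) hSB
  have hSinv : IsSelfAdjoint Sinv :=
    .of_nonneg ((algebraMap_nonneg _ (inv_pos.2 hB).le).trans hlow)
  have hdual : IsFrameOperator μ (fun ω => Sinv (F ω)) Sinv := by
    simpa [hSinv.adjoint_eq, ← comp_assoc, hS₁] using hF.comp Sinv
  refine ⟨fun x => ?_, fun x y => (hdual x y).symm⟩
  rw [one_div, one_div]
  exact ⟨(hdual.algebraMap_le_iff _).1 hlow x, (hdual.le_algebraMap_iff _).1 hup x⟩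

/-- If `F` is an integral frame with bounds `A, B` and frame operator `S`, then the canonical
dual frame `ω ↦ S⁻¹ (F ω)` is an integral frame with bounds `1/B` and `1/A`, and its frame
operator is `S⁻¹`. -/
theorem integralFrame_canonical_dual
    {Ω : Type*} [MeasurableSpace Ω] (μ : Measure Ω)
    {H : Type*} [NormedAddCommGroup H] [InnerProductSpace ℂ H] [CompleteSpace H]
    (F : Ω → H) (hmeas : ∀ x : H, Measurable fun ω => ⟪x, F ω⟫)
    (A B : ℝ) (hA : 0 < A) (hB : 0 < B)
    (hframe : ∀ x : H,
      A * ‖x‖ ^ 2 ≤ ∫ ω, ‖⟪x, F ω⟫‖ ^ 2 ∂μ ∧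
      (∫ ω, ‖⟪x, F ω⟫‖ ^ 2 ∂μ) ≤ B * ‖x‖ ^ 2)
    (S : H →L[ℂ] H)
    (hS : ∀ x y : H, ⟪S x, y⟫ = ∫ ω, ⟪x, F ω⟫ * ⟪F ω, y⟫ ∂μ)
    (Sinv : H →L[ℂ] H)
    (hS₁ : Sinv ∘L S = ContinuousLinearMap.id ℂ H)
    (hS₂ : S ∘L Sinv = ContinuousLinearMap.id ℂ H) :
    (∀ x : H,
      (1 / B) * ‖x‖ ^ 2 ≤ ∫ ω, ‖⟪x, Sinv (F ω)⟫‖ ^ 2 ∂μ ∧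
      (∫ ω, ‖⟪x, Sinv (F ω)⟫‖ ^ 2 ∂μ) ≤ (1 / A) * ‖x‖ ^ 2) ∧
    ∀ x y : H, (∫ ω, ⟪x, Sinv (F ω)⟫ * ⟪Sinv (F ω), y⟫ ∂μ) = ⟪Sinv x, y⟫ :=
  integralFrame_canonical_dual_general μ F A B hA hB hframe S hS Sinv hS₁ hS₂
end
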